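/- Let m, k, l, N be positive integers with m > 1 and 1 ≤ l < k. For every b ∈ ℂ with b^m = 1 and every z ∈ ℂ, one has W_N^{[m,k,l]}(bz) = b^Γ · W_N^{[m,k,l]}(z), where Γ = N((k−1)(N−1)+2l)/2. -/

import Mathlib

open scoped BigOperators

/-- `pPoly m j` is the polynomial `p_j^{[m]}(z) = ∑_{i=0}^{⌊j/m⌋} z^{j-im}/(i!(j-im)!)`
for `j ≥ 0`, and `0` for `j < 0`. -/
noncomputable def pPoly (m : ℕ) : ℤ → Polynomial ℂ := fun j =>
  if 0 ≤ j then
    ∑ i ∈ Finset.range (j.toNat / m + 1),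
      Polynomial.C (((Nat.factorial i * Nat.factorial (j.toNat - i * m) : ℕ) : ℂ))⁻¹ *
        Polynomial.X ^ (j.toNat - i * m)
  else 0

/-- The normalizing constant `c_N^{[m,k,l]} = k^{-N(N-1)/2} ∏_{i=1}^{N} (k(i-1)+l)!/(i-1)!`. -/
noncomputable def cConst (k l N : ℕ) : ℂ :=
  ((k : ℂ) ^ (N * (N - 1) / 2))⁻¹ *
    ∏ i ∈ Finset.range N, ((Nat.factorial (k * i + l) : ℂ) / ((Nat.factorial i : ℕ) : ℂ))

/-- The generalized Wronskian–Hermite polynomial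
`W_N^{[m,k,l]}(z) = c_N^{[m,k,l]} · det_{1≤i,j≤N} ( p^{[m]}_{k(j-1)+l-i+1}(z) )`. -/
noncomputable def WPoly (m k l N : ℕ) : Polynomial ℂ :=
  Polynomial.C (cConst k l N) *
    Matrix.det (Matrix.of fun i j : Fin N =>
      pPoly m (((k * (j : ℕ) + l : ℕ) : ℤ) - ((i : ℕ) : ℤ)))

/-!
Every monomial of `p_j^{[m]}` has degree `≡ j (mod m)`, so `p_j^{[m]}(bz) = b^j p_j^{[m]}(z)` when
`b^m = 1` (trivially also for `j < 0`). Hence the `(i, j)` entry of the matrix scales by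
`b^(kj+l) · b^(-i)`; pulling these factors out of the columns and rows multiplies the determinant
by `b^(∑ⱼ (kj+l) - ∑ᵢ i) = b^Γ`.
-/

open Finset Polynomial

theorem pPoly_eval_mul_of_pow_eq_one {m : ℕ} {b : ℂ} (hb : b ^ m = 1) (z : ℂ) (j : ℤ) :
    (pPoly m j).eval (b * z) = b ^ j * (pPoly m j).eval z := by
  rcases lt_or_ge j 0 with hj | hj
  · simp [pPoly, not_le.mpr hj]
  lift j to ℕ using hj
  simp only [pPoly, Nat.cast_nonneg, if_true, Int.toNat_natCast, zpow_natCast, eval_finsetSum,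
    eval_mul, eval_C, eval_pow, eval_X, mul_sum]
  refine sum_congr rfl fun i hi => ?_
  have him : i * m ≤ j :=
    (Nat.mul_le_mul_right m (Nat.lt_succ_iff.mp (mem_range.mp hi))).trans (Nat.div_mul_le_self j m)
  have hbj : b ^ j = b ^ (j - i * m) := by
    rw [← Nat.sub_add_cancel him, pow_add, mul_comm i, pow_mul, hb, one_pow, mul_one,
      Nat.add_sub_cancel]
  rw [hbj, mul_pow]
  ring

theorem Matrix.det_of_pow_mul_pow_mul {R n : Type*} [CommRing R] [Fintype n] [DecidableEq n]
    (a b : R) (c r : n → ℕ) (A : n → n → R) :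
    (of fun i j => a ^ c j * b ^ r i * A i j).det =
      a ^ (∑ j, c j) * b ^ (∑ i, r i) * (of A).det := by
  calc (of fun i j => a ^ c j * b ^ r i * A i j).det
      = (of fun i j => a ^ c j * (of fun i j => b ^ r i * of A i j) i j).det := by
        simp only [of_apply, mul_assoc]
    _ = a ^ (∑ j, c j) * b ^ (∑ i, r i) * (of A).det := by
        rw [det_mul_row, det_mul_column, prod_pow_eq_pow_sum, prod_pow_eq_pow_sum, mul_assoc]

theorem Fin.sum_univ_mul_val_add (k l N : ℕ) (hk : 0 < k) :
    ∑ j : Fin N, (k * j + l) =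
      N * ((k - 1) * (N - 1) + 2 * l) / 2 + ∑ i : Fin N, (i : ℕ) := by
  rw [Fin.sum_univ_eq_sum_range (fun j => k * j + l), Fin.sum_univ_eq_sum_range (fun i => i)]
  obtain ⟨k, rfl⟩ : ∃ k', k = k' + 1 := ⟨k - 1, by omega⟩
  have hgauss := sum_range_id_mul_two N
  have hΓ : N * ((k + 1 - 1) * (N - 1) + 2 * l) / 2 = k * ∑ i ∈ range N, i + N * l := by
    refine Nat.div_eq_of_eq_mul_left two_pos ?_
    rw [Nat.add_sub_cancel, add_mul, mul_assoc k, hgauss]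
    ring
  rw [hΓ, sum_add_distrib, ← mul_sum, Finset.sum_const, card_range, smul_eq_mul]
  ring

theorem WPoly_eval (m k l N : ℕ) (w : ℂ) :
    (WPoly m k l N).eval w = cConst k l N *
      (Matrix.of fun i j : Fin N =>
        (pPoly m (((k * (j : ℕ) + l : ℕ) : ℤ) - ((i : ℕ) : ℤ))).eval w).det := by
  rw [WPoly, eval_mul, eval_C, ← coe_evalRingHom, RingHom.map_det]
  rfl

theorem wronskianHermite_rootOfUnity_scaling
    (m k l N : ℕ) (hm : 1 < m) (hlk : l < k) :
    ∀ b z : ℂ, b ^ m = 1 →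
      (WPoly m k l N).eval (b * z) =
        b ^ (N * ((k - 1) * (N - 1) + 2 * l) / 2) * (WPoly m k l N).eval z := by
  intro b z hb
  have hb0 : b ≠ 0 := by
    rintro rfl
    simp [zero_pow (by omega : m ≠ 0)] at hb
  have hentry : ∀ c r : ℕ, (pPoly m (c - r)).eval (b * z) =
      b ^ c * b⁻¹ ^ r * (pPoly m (c - r)).eval z := by
    intro c r
    rw [pPoly_eval_mul_of_pow_eq_one hb, zpow_sub₀ hb0, zpow_natCast, zpow_natCast,
      div_eq_mul_inv, inv_pow]
  simp_rw [WPoly_eval, hentry]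
  rw [Matrix.det_of_pow_mul_pow_mul, Fin.sum_univ_mul_val_add k l N (by omega), pow_add,
    mul_assoc (b ^ _), ← mul_pow, mul_inv_cancel₀ hb0, one_pow, mul_one]
  ring
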